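/- Let k be a field of characteristic zero, V a k-vector space, and R, r : V⊗V → V⊗V skew-symmetric linear maps. Define bilinear maps D_id, D_(12) : V×V → V⊗V by D_id(a,b) := r(a⊗b) and D_(12)(a,b) := R(a⊗b), and for a,b,c ∈ V set T1 := D_(12)(a, D_id'(b,c))⊗D_id''(b,c), T2 := (13)·(D_id'(c,a)⊗D_(12)(b, D_id''(c,a))), T3 := (132)·(D_id(c, D_(12)'(a,b))⊗D_(12)''(a,b)), T4 := (23)·(D_(12)'(a,b)⊗D_id(c, D_(12)''(a,b))), all elements of V^⊗3. Then T1 + T2 + T3 + T4 = (R^12∘(r^13 + r^23) − (r^13 + r^23)∘R^12)(a⊗b⊗c) for all a,b,c ∈ V. In particular, T1+T2+T3+T4 = 0 for all a,b,c ∈ V if and only if [R^12, r^13 + r^23] = 0 as linear maps on V^⊗3. -/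

import Mathlib

open TensorProduct

noncomputable section

namespace YB

variable (k : Type*) [Field k] (V : Type*) [AddCommGroup V] [Module k V]

/-- The flip of `V ⊗ V`. -/
def tauV : (V ⊗[k] V) →ₗ[k] (V ⊗[k] V) := (TensorProduct.comm k V V).toLinearMap

/-- `ρ¹² = ρ ⊗ id` on `V^⊗3`. -/
def e12 (ρ : (V ⊗[k] V) →ₗ[k] (V ⊗[k] V)) :
    (V ⊗[k] (V ⊗[k] V)) →ₗ[k] (V ⊗[k] (V ⊗[k] V)) :=
  (TensorProduct.assoc k V V V).toLinearMap
    ∘ₗ TensorProduct.map ρ LinearMap.id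
    ∘ₗ (TensorProduct.assoc k V V V).symm.toLinearMap

/-- `ρ²³ = id ⊗ ρ` on `V^⊗3`. -/
def e23 (ρ : (V ⊗[k] V) →ₗ[k] (V ⊗[k] V)) :
    (V ⊗[k] (V ⊗[k] V)) →ₗ[k] (V ⊗[k] (V ⊗[k] V)) :=
  TensorProduct.map LinearMap.id ρ

/-- `ρ¹³ = (id ⊗ τ) ∘ ρ¹² ∘ (id ⊗ τ)` on `V^⊗3`. -/
def e13 (ρ : (V ⊗[k] V) →ₗ[k] (V ⊗[k] V)) :
    (V ⊗[k] (V ⊗[k] V)) →ₗ[k] (V ⊗[k] (V ⊗[k] V)) :=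
  TensorProduct.map LinearMap.id (tauV k V)
    ∘ₗ e12 k V ρ
    ∘ₗ TensorProduct.map LinearMap.id (tauV k V)

/-- `ρ` is skew-symmetric: `τ ∘ ρ ∘ τ = -ρ`. -/
def SkewSymmetric (ρ : (V ⊗[k] V) →ₗ[k] (V ⊗[k] V)) : Prop :=
  tauV k V ∘ₗ ρ ∘ₗ tauV k V = -ρ

/-- `(12)·(x⊗y⊗z) = y⊗x⊗z`. -/
def q12 : (V ⊗[k] (V ⊗[k] V)) →ₗ[k] (V ⊗[k] (V ⊗[k] V)) :=
  (TensorProduct.assoc k V V V).toLinearMap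
    ∘ₗ TensorProduct.map (tauV k V) LinearMap.id
    ∘ₗ (TensorProduct.assoc k V V V).symm.toLinearMap

/-- `(23)·(x⊗y⊗z) = x⊗z⊗y`. -/
def q23 : (V ⊗[k] (V ⊗[k] V)) →ₗ[k] (V ⊗[k] (V ⊗[k] V)) :=
  TensorProduct.map LinearMap.id (tauV k V)

/-- `(13)·(x⊗y⊗z) = z⊗y⊗x`. -/
def q13 : (V ⊗[k] (V ⊗[k] V)) →ₗ[k] (V ⊗[k] (V ⊗[k] V)) :=
  q12 k V ∘ₗ q23 k V ∘ₗ q12 k V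

/-- `(132)·(x⊗y⊗z) = y⊗z⊗x`. -/
def q132 : (V ⊗[k] (V ⊗[k] V)) →ₗ[k] (V ⊗[k] (V ⊗[k] V)) :=
  (TensorProduct.assoc k V V V).toLinearMap ∘ₗ (TensorProduct.comm k V (V ⊗[k] V)).toLinearMap

/-- For a bilinear map `D : V × V → V ⊗ V` and `a ∈ V`, the map
`x ⊗ y ↦ D(a,x) ⊗ y`, used to form `D(a, D'(b,c)) ⊗ D''(b,c)`. -/
def applyLeft (D : V →ₗ[k] (V →ₗ[k] (V ⊗[k] V))) (a : V) :
    (V ⊗[k] V) →ₗ[k] (V ⊗[k] (V ⊗[k] V)) :=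
  (TensorProduct.assoc k V V V).toLinearMap ∘ₗ TensorProduct.map (D a) LinearMap.id

/-- For a bilinear map `D` and `a ∈ V`, the map `x ⊗ y ↦ x ⊗ D(a,y)`,
used to form `D'(b,c) ⊗ D(a, D''(b,c))`. -/
def applyRight (D : V →ₗ[k] (V →ₗ[k] (V ⊗[k] V))) (a : V) :
    (V ⊗[k] V) →ₗ[k] (V ⊗[k] (V ⊗[k] V)) :=
  TensorProduct.map LinearMap.id (D a)

end YB

open YB

/-!
Skew-symmetry of `r` and `R` brings each of the four terms into standard position: on
`a ⊗ b ⊗ c` one has `T1 = R¹² r²³`, `T2 = R¹² r¹³`, `T3 = -r¹³ R¹²` and `T4 = -r²³ R¹²`,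
because the permutation acting on each term exactly undoes the flips that skew-symmetry
introduces.
-/

namespace YB

variable {k : Type*} [Field k] {V : Type*} [AddCommGroup V] [Module k V]

@[simp]
lemma tauV_tmul (x y : V) : tauV k V (x ⊗ₜ[k] y) = y ⊗ₜ[k] x := rfl

@[simp]
lemma tauV_tauV (w : V ⊗[k] V) : tauV k V (tauV k V w) = w :=
  TensorProduct.comm_comm _ _ _ w

lemma SkewSymmetric.map_tauV {ρ : (V ⊗[k] V) →ₗ[k] (V ⊗[k] V)} (h : SkewSymmetric k V ρ)
    (u : V ⊗[k] V) : ρ (tauV k V u) = -tauV k V (ρ u) := by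
  simpa using congrArg (tauV k V) (LinearMap.congr_fun h u)

lemma SkewSymmetric.map_tmul_swap {ρ : (V ⊗[k] V) →ₗ[k] (V ⊗[k] V)}
    (h : SkewSymmetric k V ρ) (x y : V) : ρ (y ⊗ₜ[k] x) = -tauV k V (ρ (x ⊗ₜ[k] y)) := by
  simpa using h.map_tauV (x ⊗ₜ[k] y)

variable (ρ : (V ⊗[k] V) →ₗ[k] (V ⊗[k] V))

lemma e12_tmul (a b c : V) :
    e12 k V ρ (a ⊗ₜ[k] (b ⊗ₜ[k] c)) = TensorProduct.assoc k V V V (ρ (a ⊗ₜ[k] b) ⊗ₜ[k] c) := by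
  simp [e12]

lemma e13_tmul (a b c : V) :
    e13 k V ρ (a ⊗ₜ[k] (b ⊗ₜ[k] c))
      = q23 k V (TensorProduct.assoc k V V V (ρ (a ⊗ₜ[k] c) ⊗ₜ[k] b)) := by
  simp [e13, e12, q23]

lemma q13_tmul_tauV (t : V) (w : V ⊗[k] V) :
    q13 k V (t ⊗ₜ[k] tauV k V w) = TensorProduct.assoc k V V V (w ⊗ₜ[k] t) := by
  induction w using TensorProduct.induction_on with
  | zero => simp
  | tmul x y => simp [q13, q12, q23]
  | add w₁ w₂ h₁ h₂ => simp [TensorProduct.tmul_add, TensorProduct.add_tmul, h₁, h₂]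

lemma q132_assoc_tauV_tmul (t : V) (w : V ⊗[k] V) :
    q132 k V (TensorProduct.assoc k V V V (tauV k V w ⊗ₜ[k] t))
      = q23 k V (TensorProduct.assoc k V V V (w ⊗ₜ[k] t)) := by
  induction w using TensorProduct.induction_on with
  | zero => simp
  | tmul x y => simp [q132, q23]
  | add w₁ w₂ h₁ h₂ => simp [TensorProduct.add_tmul, h₁, h₂]

lemma applyLeft_curry (a : V) (y : V ⊗[k] V) :
    applyLeft k V (TensorProduct.curry ρ) a y = e12 k V ρ (a ⊗ₜ[k] y) := by
  induction y using TensorProduct.induction_on with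
  | zero => simp
  | tmul x z => simp [applyLeft, e12]
  | add y₁ y₂ h₁ h₂ => simp [TensorProduct.tmul_add, h₁, h₂]

variable {ρ}

lemma q13_applyRight_curry_tauV (hρ : SkewSymmetric k V ρ) (b : V) (y : V ⊗[k] V) :
    q13 k V (applyRight k V (TensorProduct.curry ρ) b (tauV k V y))
      = -e12 k V ρ (q23 k V (TensorProduct.assoc k V V V (y ⊗ₜ[k] b))) := by
  induction y using TensorProduct.induction_on with
  | zero => simp
  | tmul x z =>
    simp only [tauV_tmul, applyRight, TensorProduct.map_tmul, LinearMap.id_apply,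
      TensorProduct.curry_apply, hρ.map_tmul_swap x b, TensorProduct.tmul_neg, map_neg,
      q13_tmul_tauV, q23, TensorProduct.assoc_tmul, e12_tmul]
  | add y₁ y₂ h₁ h₂ => simp only [map_add, TensorProduct.add_tmul, h₁, h₂, neg_add]

lemma q132_applyLeft_curry (hρ : SkewSymmetric k V ρ) (c : V) (z : V ⊗[k] V) :
    q132 k V (applyLeft k V (TensorProduct.curry ρ) c z)
      = -e13 k V ρ (TensorProduct.assoc k V V V (z ⊗ₜ[k] c)) := by
  induction z using TensorProduct.induction_on with
  | zero => simp
  | tmul x y =>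
    simp only [applyLeft, LinearMap.comp_apply, TensorProduct.map_tmul, LinearMap.id_apply,
      TensorProduct.curry_apply, LinearEquiv.coe_coe, TensorProduct.assoc_tmul,
      hρ.map_tmul_swap x c, TensorProduct.neg_tmul, map_neg, q132_assoc_tauV_tmul, e13_tmul]
  | add z₁ z₂ h₁ h₂ => simp only [map_add, TensorProduct.add_tmul, h₁, h₂, neg_add]

lemma q23_applyRight_curry (hρ : SkewSymmetric k V ρ) (c : V) (z : V ⊗[k] V) :
    q23 k V (applyRight k V (TensorProduct.curry ρ) c z)
      = -e23 k V ρ (TensorProduct.assoc k V V V (z ⊗ₜ[k] c)) := by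
  induction z using TensorProduct.induction_on with
  | zero => simp
  | tmul x y => simp [q23, applyRight, e23, hρ.map_tmul_swap y c, TensorProduct.tmul_neg]
  | add z₁ z₂ h₁ h₂ => simp only [map_add, TensorProduct.add_tmul, h₁, h₂, neg_add]

variable (R r : (V ⊗[k] V) →ₗ[k] (V ⊗[k] V))

/-- The sum `T1 + T2 + T3 + T4` built from `D_(12)(a,b) = R(a⊗b)` and `D_id(a,b) = r(a⊗b)`. -/
def crossJacobiSum (a b c : V) : V ⊗[k] (V ⊗[k] V) :=
  applyLeft k V (TensorProduct.curry R) a (r (b ⊗ₜ[k] c))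
    + q13 k V (applyRight k V (TensorProduct.curry R) b (r (c ⊗ₜ[k] a)))
    + q132 k V (applyLeft k V (TensorProduct.curry r) c (R (a ⊗ₜ[k] b)))
    + q23 k V (applyRight k V (TensorProduct.curry r) c (R (a ⊗ₜ[k] b)))

variable {R r}

theorem crossJacobiSum_eq_commutator_apply (hR : SkewSymmetric k V R)
    (hr : SkewSymmetric k V r) (a b c : V) :
    crossJacobiSum R r a b c
      = (e12 k V R ∘ₗ (e13 k V r + e23 k V r)
          - (e13 k V r + e23 k V r) ∘ₗ e12 k V R) (a ⊗ₜ[k] (b ⊗ₜ[k] c)) := by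
  have T1 : applyLeft k V (TensorProduct.curry R) a (r (b ⊗ₜ[k] c))
      = e12 k V R (e23 k V r (a ⊗ₜ[k] (b ⊗ₜ[k] c))) := applyLeft_curry R a _
  have T2 : q13 k V (applyRight k V (TensorProduct.curry R) b (r (c ⊗ₜ[k] a)))
      = e12 k V R (e13 k V r (a ⊗ₜ[k] (b ⊗ₜ[k] c))) := by
    rw [hr.map_tmul_swap, map_neg, map_neg, q13_applyRight_curry_tauV hR, neg_neg, e13_tmul]
  have T3 : q132 k V (applyLeft k V (TensorProduct.curry r) c (R (a ⊗ₜ[k] b)))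
      = -e13 k V r (e12 k V R (a ⊗ₜ[k] (b ⊗ₜ[k] c))) := by
    rw [q132_applyLeft_curry hr, e12_tmul]
  have T4 : q23 k V (applyRight k V (TensorProduct.curry r) c (R (a ⊗ₜ[k] b)))
      = -e23 k V r (e12 k V R (a ⊗ₜ[k] (b ⊗ₜ[k] c))) := by
    rw [q23_applyRight_curry hr, e12_tmul]
  rw [crossJacobiSum, T1, T2, T3, T4]
  simp only [LinearMap.sub_apply, LinearMap.comp_apply, LinearMap.add_apply, map_add]
  abel

end YB

theorem cross_jacobi_sum_eq_commutator_general
    (k : Type*) [Field k]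
    (V : Type*) [AddCommGroup V] [Module k V]
    (R r : (V ⊗[k] V) →ₗ[k] (V ⊗[k] V))
    (hRskew : SkewSymmetric k V R) (hrskew : SkewSymmetric k V r) :
    (∀ a b c : V,
      applyLeft k V (TensorProduct.curry R) a (r (b ⊗ₜ[k] c))
        + q13 k V (applyRight k V (TensorProduct.curry R) b (r (c ⊗ₜ[k] a)))
        + q132 k V (applyLeft k V (TensorProduct.curry r) c (R (a ⊗ₜ[k] b)))
        + q23 k V (applyRight k V (TensorProduct.curry r) c (R (a ⊗ₜ[k] b)))
      = (e12 k V R ∘ₗ (e13 k V r + e23 k V r)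
          - (e13 k V r + e23 k V r) ∘ₗ e12 k V R) (a ⊗ₜ[k] (b ⊗ₜ[k] c))) ∧
    ((∀ a b c : V,
      applyLeft k V (TensorProduct.curry R) a (r (b ⊗ₜ[k] c))
        + q13 k V (applyRight k V (TensorProduct.curry R) b (r (c ⊗ₜ[k] a)))
        + q132 k V (applyLeft k V (TensorProduct.curry r) c (R (a ⊗ₜ[k] b)))
        + q23 k V (applyRight k V (TensorProduct.curry r) c (R (a ⊗ₜ[k] b))) = 0)
      ↔ e12 k V R ∘ₗ (e13 k V r + e23 k V r)
          - (e13 k V r + e23 k V r) ∘ₗ e12 k V R = 0) := by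
  have key := crossJacobiSum_eq_commutator_apply hRskew hrskew
  refine ⟨key, fun h => TensorProduct.ext_threefold' fun a b c => ?_, fun h a b c => ?_⟩
  · rw [← key, LinearMap.zero_apply]
    exact h a b c
  · exact (key a b c).trans (by rw [h, LinearMap.zero_apply])

/-- For skew-symmetric `R, r : V⊗V → V⊗V` and the brackets `D_id(a,b) = r(a⊗b)`,
`D₍₁₂₎(a,b) = R(a⊗b)`, the cross-Jacobi sum `T1+T2+T3+T4` equals
`[R¹², r¹³ + r²³](a⊗b⊗c)`; in particular it vanishes identically iff `[R¹², r¹³+r²³] = 0`. -/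
theorem cross_jacobi_sum_eq_commutator
    (k : Type*) [Field k] [CharZero k]
    (V : Type*) [AddCommGroup V] [Module k V]
    (R r : (V ⊗[k] V) →ₗ[k] (V ⊗[k] V))
    (hRskew : SkewSymmetric k V R) (hrskew : SkewSymmetric k V r) :
    (∀ a b c : V,
      applyLeft k V (TensorProduct.curry R) a (r (b ⊗ₜ[k] c))
        + q13 k V (applyRight k V (TensorProduct.curry R) b (r (c ⊗ₜ[k] a)))
        + q132 k V (applyLeft k V (TensorProduct.curry r) c (R (a ⊗ₜ[k] b)))
        + q23 k V (applyRight k V (TensorProduct.curry r) c (R (a ⊗ₜ[k] b)))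
      = (e12 k V R ∘ₗ (e13 k V r + e23 k V r)
          - (e13 k V r + e23 k V r) ∘ₗ e12 k V R) (a ⊗ₜ[k] (b ⊗ₜ[k] c))) ∧
    ((∀ a b c : V,
      applyLeft k V (TensorProduct.curry R) a (r (b ⊗ₜ[k] c))
        + q13 k V (applyRight k V (TensorProduct.curry R) b (r (c ⊗ₜ[k] a)))
        + q132 k V (applyLeft k V (TensorProduct.curry r) c (R (a ⊗ₜ[k] b)))
        + q23 k V (applyRight k V (TensorProduct.curry r) c (R (a ⊗ₜ[k] b))) = 0)
      ↔ e12 k V R ∘ₗ (e13 k V r + e23 k V r)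
          - (e13 k V r + e23 k V r) ∘ₗ e12 k V R = 0) :=
  cross_jacobi_sum_eq_commutator_general k V R r hRskew hrskew
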